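/- arXiv:2411.15636 — 2 statements merged into one kernel-verified Lean document; each statement's English description precedes it below -/
import Mathlib

section
/- Let T = [[A,B],[C,D]] be a bounded operator from H to K relative to closed subspaces M ⊆ H, N ⊆ K, with R(D) closed and nonzero. Then T is (M,N)-complementable (i.e., R(C) ⊆ R(D) and R(B*) ⊆ R(D*)) if and only if C(B_M) ⊆ (‖C‖/γ(D)) · D(B_{M⊥}) and B*(B_N) ⊆ (‖B‖/γ(D*)) · D*(B_{N⊥}), where γ denotes the reduced minimum modulus. -/
open ContinuousLinearMap Filter

variable {H K : Type*} [NormedAddCommGroup H] [InnerProductSpace ℂ H] [CompleteSpace H]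
  [NormedAddCommGroup K] [InnerProductSpace ℂ K] [CompleteSpace K]

/-- The (1,1)-block `A = P_N T P_M : M → N` of `T` relative to `H = M ⊕ M⊥`, `K = N ⊕ N⊥`. -/
noncomputable def blkA (M : Submodule ℂ H) (N : Submodule ℂ K) [CompleteSpace M]
    [CompleteSpace N] (T : H →L[ℂ] K) : M →L[ℂ] N :=
  N.orthogonalProjectionOnto.comp (T.comp (Submodule.subtypeL M))

/-- The (1,2)-block `B = P_N T P_{M⊥} : M⊥ → N`. -/
noncomputable def blkB (M : Submodule ℂ H) (N : Submodule ℂ K) [CompleteSpace M]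
    [CompleteSpace N] (T : H →L[ℂ] K) : Mᗮ →L[ℂ] N :=
  N.orthogonalProjectionOnto.comp (T.comp (Submodule.subtypeL Mᗮ))

/-- The (2,1)-block `C = P_{N⊥} T P_M : M → N⊥`. -/
noncomputable def blkC (M : Submodule ℂ H) (N : Submodule ℂ K) [CompleteSpace M]
    [CompleteSpace N] (T : H →L[ℂ] K) : M →L[ℂ] Nᗮ :=
  Nᗮ.orthogonalProjectionOnto.comp (T.comp (Submodule.subtypeL M))

/-- The (2,2)-block `D = P_{N⊥} T P_{M⊥} : M⊥ → N⊥`. -/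
noncomputable def blkD (M : Submodule ℂ H) (N : Submodule ℂ K) [CompleteSpace M]
    [CompleteSpace N] (T : H →L[ℂ] K) : Mᗮ →L[ℂ] Nᗮ :=
  Nᗮ.orthogonalProjectionOnto.comp (T.comp (Submodule.subtypeL Mᗮ))

/-- The reduced minimum modulus `γ(D) = inf {‖Dx‖ : x ∈ N(D)⊥, ‖x‖ = 1}`. -/
noncomputable def redMinMod {E F : Type*} [NormedAddCommGroup E] [InnerProductSpace ℂ E]
    [NormedAddCommGroup F] [InnerProductSpace ℂ F] (D : E →L[ℂ] F) : ℝ :=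
  sInf {r : ℝ | ∃ x ∈ (LinearMap.ker (D : E →ₗ[ℂ] F))ᗮ, ‖x‖ = 1 ∧ r = ‖D x‖}

section Helpers
open scoped ComplexInnerProductSpace
set_option linter.unusedSectionVars false
variable {G E F : Type*} [NormedAddCommGroup G] [InnerProductSpace ℂ G] [CompleteSpace G]
  [NormedAddCommGroup E] [InnerProductSpace ℂ E] [CompleteSpace E]
  [NormedAddCommGroup F] [InnerProductSpace ℂ F] [CompleteSpace F]

lemma gamma_le (D : E →L[ℂ] F) {y : E} (hy : y ∈ (LinearMap.ker (D : E →ₗ[ℂ] F))ᗮ) :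
    redMinMod D * ‖y‖ ≤ ‖D y‖ := by
  rcases eq_or_ne y 0 with rfl | hy0
  · simp
  have hny : (0:ℝ) < ‖y‖ := norm_pos_iff.mpr hy0
  have hb : BddBelow {r : ℝ | ∃ x ∈ (LinearMap.ker (D : E →ₗ[ℂ] F))ᗮ, ‖x‖ = 1 ∧ r = ‖D x‖} := by
    refine ⟨0, ?_⟩
    rintro r ⟨x, hx, hn, rfl⟩
    exact norm_nonneg _
  have hmem : ‖D y‖ / ‖y‖ ∈ {r : ℝ | ∃ x ∈ (LinearMap.ker (D : E →ₗ[ℂ] F))ᗮ, ‖x‖ = 1 ∧ r = ‖D x‖} := by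
    refine ⟨((‖y‖⁻¹ : ℝ) : ℂ) • y, Submodule.smul_mem _ _ hy, ?_, ?_⟩
    · simp [norm_smul, hny.ne', inv_mul_cancel₀ hny.ne']
    · rw [map_smul]
      simp [norm_smul, div_eq_inv_mul]
  have := csInf_le hb hmem
  calc redMinMod D * ‖y‖ ≤ (‖D y‖ / ‖y‖) * ‖y‖ := by
        exact mul_le_mul_of_nonneg_right this hny.le
    _ = ‖D y‖ := by field_simp

lemma exists_preimage (D : E →L[ℂ] F) {z : F} (hz : z ∈ Set.range D) :
    ∃ y ∈ (LinearMap.ker (D : E →ₗ[ℂ] F))ᗮ, D y = z ∧ redMinMod D * ‖y‖ ≤ ‖z‖ := by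
  obtain ⟨x, rfl⟩ := hz
  haveI : CompleteSpace (LinearMap.ker (D : E →ₗ[ℂ] F)) := (ContinuousLinearMap.isClosed_ker D).completeSpace_coe
  set y : E := (Submodule.orthogonalProjectionOnto (LinearMap.ker (D : E →ₗ[ℂ] F))ᗮ x : E) with hy
  have hmem : y ∈ (LinearMap.ker (D : E →ₗ[ℂ] F))ᗮ := (Submodule.orthogonalProjectionOnto (LinearMap.ker (D : E →ₗ[ℂ] F))ᗮ x).2
  have hxy : x - y ∈ LinearMap.ker (D : E →ₗ[ℂ] F) := by
    have := Submodule.sub_starProjection_mem_orthogonal (K := (LinearMap.ker (D : E →ₗ[ℂ] F))ᗮ) x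
    rwa [Submodule.orthogonal_orthogonal] at this
  have hDy : D y = D x := by
    have h0 : D (x - y) = 0 := hxy
    rw [map_sub, sub_eq_zero] at h0
    exact h0.symm
  exact ⟨y, hmem, hDy, hDy ▸ gamma_le D hmem⟩

set_option linter.unusedSectionVars false

lemma exists_equiv (D : E →L[ℂ] F) (hclosed : IsClosed (Set.range D)) :
    ∃ e : ((LinearMap.ker (D : E →ₗ[ℂ] F))ᗮ) ≃L[ℂ] (LinearMap.range (D : E →ₗ[ℂ] F)), ∀ v, (e v : F) = D v := by
  haveI : CompleteSpace (LinearMap.range (D : E →ₗ[ℂ] F)) := by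
    have h : IsClosed ((LinearMap.range (D : E →ₗ[ℂ] F) : Set F)) := by rwa [LinearMap.coe_range]
    exact h.completeSpace_coe
  haveI : CompleteSpace (LinearMap.ker (D : E →ₗ[ℂ] F)) := (ContinuousLinearMap.isClosed_ker D).completeSpace_coe
  set D0 : ((LinearMap.ker (D : E →ₗ[ℂ] F))ᗮ) →L[ℂ] (LinearMap.range (D : E →ₗ[ℂ] F)) :=
    (D.comp (Submodule.subtypeL (LinearMap.ker (D : E →ₗ[ℂ] F))ᗮ)).codRestrict (LinearMap.range (D : E →ₗ[ℂ] F))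
      (fun v => LinearMap.mem_range_self _ _) with hD0
  have hD0app : ∀ v, (D0 v : F) = D v := fun v => rfl
  have hinj : D0.ker = ⊥ := by
    rw [Submodule.eq_bot_iff]
    rintro v hv
    have h1 : D (v : E) = 0 := by
      have := congrArg (Subtype.val) (show D0 v = 0 from hv)
      simpa [hD0app] using this
    have h2 : (v : E) ∈ LinearMap.ker (D : E →ₗ[ℂ] F) := h1
    have h3 : (inner (𝕜 := ℂ) (v : E) (v : E)) = 0 := v.2 (v : E) h2
    exact Subtype.ext (inner_self_eq_zero.mp h3)
  have hsurj : D0.range = ⊤ := by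
    rw [Submodule.eq_top_iff']
    rintro ⟨z, hz⟩
    obtain ⟨y, hy, hDy, -⟩ := exists_preimage D hz
    exact ⟨⟨y, hy⟩, Subtype.ext (by simpa [hD0app] using hDy)⟩
  exact ⟨ContinuousLinearEquiv.ofBijective D0 hinj hsurj, fun v => rfl⟩

lemma gamma_pos (D : E →L[ℂ] F) (hclosed : IsClosed (Set.range D)) (hne : D ≠ 0) :
    0 < redMinMod D := by
  obtain ⟨e, he⟩ := exists_equiv D hclosed
  set S : (LinearMap.range (D : E →ₗ[ℂ] F)) →L[ℂ] ((LinearMap.ker (D : E →ₗ[ℂ] F))ᗮ) := e.symm.toContinuousLinearMap with hS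
  have hbound : ∀ v : (LinearMap.ker (D : E →ₗ[ℂ] F))ᗮ, ‖v‖ ≤ ‖S‖ * ‖D (v : E)‖ := by
    intro v
    have h1 : S (e v) = v := e.symm_apply_apply v
    have h2 : ‖S (e v)‖ ≤ ‖S‖ * ‖e v‖ := S.le_opNorm _
    have h3 : ‖e v‖ = ‖D (v : E)‖ := by rw [← he v]; rfl
    rw [h1, h3] at h2
    exact h2
  -- nonempty witness
  obtain ⟨x, hx⟩ : ∃ x, D x ≠ 0 := by
    by_contra h
    push_neg at h
    exact hne (ContinuousLinearMap.ext fun x => by simp [h x])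
  obtain ⟨y, hy, hDy, -⟩ := exists_preimage D ⟨x, rfl⟩
  have hy0 : y ≠ 0 := fun h => hx (by rw [← hDy, h, map_zero])
  have hny : (0:ℝ) < ‖y‖ := norm_pos_iff.mpr hy0
  set u : E := ((‖y‖⁻¹ : ℝ) : ℂ) • y with hu
  have humem : u ∈ (LinearMap.ker (D : E →ₗ[ℂ] F))ᗮ := Submodule.smul_mem _ _ hy
  have hunorm : ‖u‖ = 1 := by simp [hu, norm_smul, inv_mul_cancel₀ hny.ne']
  have hne2 : {r : ℝ | ∃ x ∈ (LinearMap.ker (D : E →ₗ[ℂ] F))ᗮ, ‖x‖ = 1 ∧ r = ‖D x‖}.Nonempty :=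
    ⟨‖D u‖, u, humem, hunorm, rfl⟩
  have hSpos : 0 < ‖S‖ := by
    by_contra h
    push_neg at h
    have hS0 : ‖S‖ = 0 := le_antisymm h (norm_nonneg S)
    have := hbound ⟨u, humem⟩
    rw [hS0, zero_mul] at this
    have : ‖u‖ ≤ 0 := by simpa using this
    rw [hunorm] at this; linarith
  have key : ∀ r ∈ {r : ℝ | ∃ x ∈ (LinearMap.ker (D : E →ₗ[ℂ] F))ᗮ, ‖x‖ = 1 ∧ r = ‖D x‖}, ‖S‖⁻¹ ≤ r := by
    rintro r ⟨w, hw, hwn, rfl⟩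
    have := hbound ⟨w, hw⟩
    simp only [Submodule.coe_mk] at this
    rw [show ‖(⟨w, hw⟩ : (LinearMap.ker (D : E →ₗ[ℂ] F))ᗮ)‖ = ‖w‖ from rfl, hwn] at this
    rw [inv_le_iff_one_le_mul₀ hSpos]
    linarith
  exact lt_of_lt_of_le (inv_pos.mpr hSpos) (le_csInf hne2 key)

lemma key_iff (C : G →L[ℂ] F) (D : E →L[ℂ] F) (hclosed : IsClosed (Set.range D))
    (hne : D ≠ 0) :
    Set.range C ⊆ Set.range D ↔
      ∀ x : G, ‖x‖ ≤ 1 → ∃ y : E, ‖y‖ ≤ 1 ∧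
        C x = ((‖C‖ / redMinMod D : ℝ) : ℂ) • D y := by
  have hγ : 0 < redMinMod D := gamma_pos D hclosed hne
  constructor
  · intro hsub x hx
    rcases eq_or_ne C 0 with rfl | hC0
    · exact ⟨0, by simp, by simp⟩
    have hC : (0:ℝ) < ‖C‖ := norm_pos_iff.mpr hC0
    obtain ⟨y, hy, hDy, hbd⟩ := exists_preimage D (hsub ⟨x, rfl⟩)
    refine ⟨((redMinMod D / ‖C‖ : ℝ) : ℂ) • y, ?_, ?_⟩
    · have h1 : ‖C x‖ ≤ ‖C‖ := le_trans (C.le_opNorm x) (by nlinarith [norm_nonneg C])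
      have h2 : redMinMod D * ‖y‖ ≤ ‖C‖ := le_trans (hDy ▸ hbd) h1
      rw [norm_smul]
      simp only [Complex.norm_real, Real.norm_eq_abs, abs_of_nonneg (div_nonneg hγ.le hC.le)]
      rw [div_mul_eq_mul_div, div_le_one hC]
      exact h2
    · rw [map_smul, smul_smul, ← Complex.ofReal_mul, hDy]
      have : ‖C‖ / redMinMod D * (redMinMod D / ‖C‖) = 1 := by
        field_simp
      rw [this]
      simp
  · intro h z hz
    obtain ⟨x, rfl⟩ := hz
    rcases eq_or_ne x 0 with rfl | hx0
    · exact ⟨0, by simp⟩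
    have hnx : (0:ℝ) < ‖x‖ := norm_pos_iff.mpr hx0
    obtain ⟨y, -, hy⟩ := h (((‖x‖⁻¹ : ℝ) : ℂ) • x)
      (by simp [norm_smul, inv_mul_cancel₀ hnx.ne'])
    refine ⟨((‖x‖ : ℝ) : ℂ) • ((‖C‖ / redMinMod D : ℝ) : ℂ) • y, ?_⟩
    rw [map_smul, map_smul, ← hy, map_smul, smul_smul, ← Complex.ofReal_mul,
      mul_inv_cancel₀ hnx.ne']
    simp

lemma adjoint_range_eq (D : E →L[ℂ] F) (hclosed : IsClosed (Set.range D)) :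
    Set.range (adjoint D) = ((LinearMap.ker (D : E →ₗ[ℂ] F))ᗮ : Set E) := by
  obtain ⟨e, he⟩ := exists_equiv D hclosed
  haveI : CompleteSpace (LinearMap.range (D : E →ₗ[ℂ] F)) := by
    have h : IsClosed ((LinearMap.range (D : E →ₗ[ℂ] F) : Set F)) := by rwa [LinearMap.coe_range]
    exact h.completeSpace_coe
  haveI : CompleteSpace (LinearMap.ker (D : E →ₗ[ℂ] F)) := (ContinuousLinearMap.isClosed_ker D).completeSpace_coe
  apply Set.Subset.antisymm
  · rintro _ ⟨z, rfl⟩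
    intro u hu
    rw [adjoint_inner_right]
    have : D u = 0 := hu
    rw [this, inner_zero_left]
  · intro y hy
    set y' : ((LinearMap.ker (D : E →ₗ[ℂ] F))ᗮ) := ⟨y, hy⟩ with hy'
    set w : (LinearMap.range (D : E →ₗ[ℂ] F)) := adjoint e.symm.toContinuousLinearMap y' with hw
    refine ⟨(w : F), ?_⟩
    apply ext_inner_left ℂ
    intro v
    rw [adjoint_inner_right]
    -- D v = e (Q v) where Q is projection onto (ker D)ᗮ
    set Q := Submodule.orthogonalProjectionOnto (LinearMap.ker (D : E →ₗ[ℂ] F))ᗮ with hQ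
    have hv : v - (Q v : E) ∈ LinearMap.ker (D : E →ₗ[ℂ] F) := by
      have := Submodule.sub_starProjection_mem_orthogonal (K := (LinearMap.ker (D : E →ₗ[ℂ] F))ᗮ) v
      rwa [Submodule.orthogonal_orthogonal] at this
    have hDv : D v = (e (Q v) : F) := by
      rw [he]
      have h0 : D (v - (Q v : E)) = 0 := hv
      rw [map_sub, sub_eq_zero] at h0
      exact h0
    have step1 : (inner (𝕜 := ℂ) (D v) (w : F)) = inner (𝕜 := ℂ) (e (Q v)) w := by
      rw [hDv]; rfl
    have step2 : (inner (𝕜 := ℂ) (e (Q v)) w) = inner (𝕜 := ℂ) (Q v) y' := by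
      rw [hw, adjoint_inner_right]
      congr 1
      · show (e.symm.toContinuousLinearMap) (e (Q v)) = Q v
        exact e.symm_apply_apply (Q v)
    have step3 : (inner (𝕜 := ℂ) ((Q v : E)) y) = inner (𝕜 := ℂ) v y := by
      have horth : (inner (𝕜 := ℂ) (v - (Q v : E)) y) = 0 :=
        Submodule.inner_right_of_mem_orthogonal hv hy
      rw [inner_sub_left, sub_eq_zero] at horth
      exact horth.symm
    rw [step1, step2]
    rw [show (inner (𝕜 := ℂ) (Q v) y' : ℂ) = inner (𝕜 := ℂ) ((Q v : E)) y from rfl, step3]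

lemma adjoint_range_closed (D : E →L[ℂ] F) (hclosed : IsClosed (Set.range D)) :
    IsClosed (Set.range (adjoint D)) := by
  rw [adjoint_range_eq D hclosed]
  exact Submodule.isClosed_orthogonal _

lemma adjoint_ne_zero (D : E →L[ℂ] F) (hne : D ≠ 0) : adjoint D ≠ 0 := by
  intro h
  apply hne
  rw [← adjoint_adjoint D, h, map_zero]

end Helpers

/-- For `T = [[A,B],[C,D]]` with `R(D)` closed and nonzero, `T` is `(M,N)`-complementable
iff `C(B_M) ⊆ (‖C‖/γ(D)) D(B_{M⊥})` and `B*(B_N) ⊆ (‖B‖/γ(D*)) D*(B_{N⊥})`. -/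
theorem stmt13 (M : Submodule ℂ H) (N : Submodule ℂ K) [CompleteSpace M] [CompleteSpace N]
    (T : H →L[ℂ] K)
    (hclosed : IsClosed (Set.range (blkD M N T))) (hne : blkD M N T ≠ 0) :
    (Set.range (blkC M N T) ⊆ Set.range (blkD M N T) ∧
        Set.range (adjoint (blkB M N T)) ⊆ Set.range (adjoint (blkD M N T))) ↔
      ((∀ x : M, ‖x‖ ≤ 1 → ∃ y : Mᗮ, ‖y‖ ≤ 1 ∧
          blkC M N T x =
            ((‖blkC M N T‖ / redMinMod (blkD M N T) : ℝ) : ℂ) • blkD M N T y) ∧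
        (∀ x : N, ‖x‖ ≤ 1 → ∃ y : Nᗮ, ‖y‖ ≤ 1 ∧
          adjoint (blkB M N T) x =
            ((‖blkB M N T‖ / redMinMod (adjoint (blkD M N T)) : ℝ) : ℂ) •
              adjoint (blkD M N T) y)) := by
  haveI : CompleteSpace (Mᗮ : Submodule ℂ H) := (Submodule.isClosed_orthogonal M).completeSpace_coe
  haveI : CompleteSpace (Nᗮ : Submodule ℂ K) := (Submodule.isClosed_orthogonal N).completeSpace_coe
  have h1 := key_iff (blkC M N T) (blkD M N T) hclosed hne
  have h2 := key_iff (adjoint (blkB M N T)) (adjoint (blkD M N T))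
    (adjoint_range_closed _ hclosed) (adjoint_ne_zero _ hne)
  have hnB : ‖adjoint (blkB M N T)‖ = ‖blkB M N T‖ :=
    LinearIsometryEquiv.norm_map adjoint (blkB M N T)
  rw [hnB] at h2
  exact and_congr h1 h2
end

section
/- Let T = [[A,B],[C,D]] be an (M,N)-complementable bounded operator (R(C) ⊆ R(D) and R(B*) ⊆ R(D*)) such that R(C) is infinite-dimensional. Then there exists a sequence of bounded operators T_n, none of which is (M,N)-complementable (indeed R(C) ⊄ R(D_n) where D_n is the (2,2)-block of T_n), with T_n → T in the strong operator topology. Hence T lies in the boundary of the set of non-(M,N)-complementable operators with respect to the strong operator topology. -/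
open ContinuousLinearMap Filter

lemma exists_orthonormal_seq {E : Type*} [NormedAddCommGroup E] [InnerProductSpace ℂ E]
    (S : Submodule ℂ E) (hS : ¬ FiniteDimensional ℂ S) :
    ∃ a : ℕ → E, Orthonormal ℂ a ∧ ∀ n, a n ∈ S := by
  have hInf : Infinite (Module.Basis.ofVectorSpaceIndex ℂ S) := by
    by_contra hfin
    rw [not_infinite_iff_finite] at hfin
    exact hS (Module.Finite.of_basis (Module.Basis.ofVectorSpace ℂ S))
  set b := Module.Basis.ofVectorSpace ℂ S
  set f : ℕ → S := b ∘ (Infinite.natEmbedding _) with hf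
  have hfi : LinearIndependent ℂ f :=
    b.linearIndependent.comp _ (Infinite.natEmbedding _).injective
  set g : ℕ → S := InnerProductSpace.gramSchmidtNormed ℂ f with hg
  have hgo : Orthonormal ℂ g := InnerProductSpace.gramSchmidtNormed_orthonormal hfi
  exact ⟨fun n => (g n : E), hgo.comp_linearIsometry S.subtypeₗᵢ, fun n => (g n).2⟩


variable {H K : Type*} [NormedAddCommGroup H] [InnerProductSpace ℂ H] [CompleteSpace H]
  [NormedAddCommGroup K] [InnerProductSpace ℂ K] [CompleteSpace K]

/-- If `T = [[A,B],[C,D]]` is `(M,N)`-complementable and `R(C)` is infinite-dimensional,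
then there is a sequence `(T_n)` of bounded operators, each having the same blocks
`A, B, C` as `T` but with `R(C) ⊄ R(D_n)` (so no `T_n` is `(M,N)`-complementable),
converging to `T` in the strong operator topology.  Hence `T` is a boundary point of the
set of non-`(M,N)`-complementable operators in the strong operator topology. -/
theorem stmt18 (M : Submodule ℂ H) (N : Submodule ℂ K) [CompleteSpace M] [CompleteSpace N]
    (T : H →L[ℂ] K)
    (hC : Set.range (blkC M N T) ⊆ Set.range (blkD M N T))
    (hB : Set.range (adjoint (blkB M N T)) ⊆ Set.range (adjoint (blkD M N T)))
    (hinf : ¬ FiniteDimensional ℂ (LinearMap.range (blkC M N T : M →ₗ[ℂ] Nᗮ))) :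
    ∃ Tn : ℕ → H →L[ℂ] K,
      (∀ n, blkA M N (Tn n) = blkA M N T ∧ blkB M N (Tn n) = blkB M N T ∧
        blkC M N (Tn n) = blkC M N T ∧
        ¬ Set.range (blkC M N T) ⊆ Set.range (blkD M N (Tn n))) ∧
      ∀ x : H, Filter.Tendsto (fun n => Tn n x) Filter.atTop (nhds (T x)) := by
    classical
  set C := blkC M N T with hCdef
  set D := blkD M N T with hDdef
  haveI : CompleteSpace (LinearMap.ker (D : ↥Mᗮ →ₗ[ℂ] ↥Nᗮ)) := by exact (ContinuousLinearMap.isClosed_ker D).completeSpace_coe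
  set S : Submodule ℂ ↥Mᗮ :=
    (LinearMap.ker (D : ↥Mᗮ →ₗ[ℂ] ↥Nᗮ))ᗮ ⊓ (LinearMap.range (C : ↥M →ₗ[ℂ] ↥Nᗮ)).comap (D : ↥Mᗮ →ₗ[ℂ] ↥Nᗮ) with hSdef
  -- S is not finite dimensional
  have hS : ¬ FiniteDimensional ℂ S := by
    intro hfin
    apply hinf
    have hmem : ∀ s : S, (D : ↥Mᗮ →ₗ[ℂ] ↥Nᗮ) (S.subtype s) ∈ LinearMap.range (C : ↥M →ₗ[ℂ] ↥Nᗮ) := fun s =>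
      (Submodule.mem_inf.mp s.2).2
    set φ : S →ₗ[ℂ] LinearMap.range (C : ↥M →ₗ[ℂ] ↥Nᗮ) :=
      LinearMap.codRestrict _ ((D : ↥Mᗮ →ₗ[ℂ] ↥Nᗮ).comp S.subtype) hmem with hφ
    have hsurj : Function.Surjective φ := by
      rintro ⟨y, hy⟩
      obtain ⟨m, hm⟩ := LinearMap.mem_range.mp hy
      obtain ⟨x, hx⟩ : y ∈ Set.range D := hC ⟨m, hm⟩
      set x₀ : ↥Mᗮ := x - ((LinearMap.ker (D : ↥Mᗮ →ₗ[ℂ] ↥Nᗮ)).orthogonalProjectionOnto x : ↥Mᗮ) with hx₀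
      have h1 : x₀ ∈ (LinearMap.ker (D : ↥Mᗮ →ₗ[ℂ] ↥Nᗮ))ᗮ := by
          have := Submodule.sub_starProjection_mem_orthogonal (K := LinearMap.ker (D : ↥Mᗮ →ₗ[ℂ] ↥Nᗮ)) x
          exact this
      have hDx₀ : D x₀ = y := by
        have : D (((LinearMap.ker (D : ↥Mᗮ →ₗ[ℂ] ↥Nᗮ)).orthogonalProjectionOnto x : ↥Mᗮ)) = 0 :=
          ((LinearMap.ker (D : ↥Mᗮ →ₗ[ℂ] ↥Nᗮ)).orthogonalProjectionOnto x).2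
        rw [hx₀, map_sub, this, hx, sub_zero]
      have h2 : x₀ ∈ (LinearMap.range (C : ↥M →ₗ[ℂ] ↥Nᗮ)).comap (D : ↥Mᗮ →ₗ[ℂ] ↥Nᗮ) := by
        rw [Submodule.mem_comap]
        show D x₀ ∈ _
        rw [hDx₀]; exact hy
      refine ⟨⟨x₀, Submodule.mem_inf.mpr ⟨h1, h2⟩⟩, ?_⟩
      apply Subtype.ext
      simpa [hφ] using hDx₀
    exact Module.Finite.of_surjective φ hsurj
  obtain ⟨a, ha, haS⟩ := exists_orthonormal_seq S hS
  have haker : ∀ n, a n ∈ (LinearMap.ker (D : ↥Mᗮ →ₗ[ℂ] ↥Nᗮ))ᗮ := fun n => (Submodule.mem_inf.mp (haS n)).1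
  have harange : ∀ n, D (a n) ∈ LinearMap.range (C : ↥M →ₗ[ℂ] ↥Nᗮ) := fun n => (Submodule.mem_inf.mp (haS n)).2
  have hanorm : ∀ n, ‖a n‖ = 1 := ha.1
  -- the perturbations
  set R : ℕ → (↥Mᗮ →L[ℂ] ↥Mᗮ) := fun n =>
    (ContinuousLinearMap.toSpanSingleton ℂ (a n)).comp (innerSL ℂ (a n)) with hRdef
  have hRapp : ∀ n x, R n x = (inner ℂ (a n) x : ℂ) • a n := fun n x => rfl
  set P : ℕ → (H →L[ℂ] K) := fun n =>
    (Nᗮ.subtypeL).comp (((D.comp (R n)).comp Mᗮ.orthogonalProjectionOnto)) with hPdef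
  have hPapp : ∀ n (x : H),
      P n x = ((D ((inner ℂ (a n) ((Mᗮ.orthogonalProjectionOnto x : ↥Mᗮ)) : ℂ) • a n)) : K) := by
    intro n x; rfl
  -- blkD of the perturbed operator
  have hblkD : ∀ n, blkD M N (T - P n) = D - D.comp (R n) := by
    intro n
    ext u
    have h1 : (Mᗮ.orthogonalProjectionOnto (u : H)) = u :=
      Submodule.orthogonalProjectionOnto_mem_subspace_eq_self u
    simp only [blkD, hDdef, ContinuousLinearMap.comp_apply, ContinuousLinearMap.sub_apply,
      Submodule.subtypeL_apply, map_sub]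
    rw [hPapp n (u : H)]
    rw [show ((Mᗮ.orthogonalProjectionOnto (u : H)) : ↥Mᗮ) = u from h1]
    rw [Submodule.orthogonalProjectionOnto_mem_subspace_eq_self]
    rfl
  refine ⟨fun n => T - P n, fun n => ?_, fun x => ?_⟩
  · have hPNzero : ∀ (y : H), N.orthogonalProjectionOnto (P n y) = 0 := by
      intro y
      rw [hPapp n y]
      exact Submodule.orthogonalProjectionOnto_apply_of_mem_orthogonal (Submodule.coe_mem _)
    have hPMzero : ∀ (u : M), P n (u : H) = 0 := by
      intro u
      have : Mᗮ.orthogonalProjectionOnto (u : H) = 0 :=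
        Submodule.orthogonalProjectionOnto_apply_of_mem_orthogonal
          (Submodule.le_orthogonal_orthogonal M u.2)
      rw [hPapp n (u : H), this]
      simp
    refine ⟨?_, ?_, ?_, ?_⟩
    · ext u
      simp [blkA, ContinuousLinearMap.comp_apply, map_sub, hPNzero]
    · ext u
      simp [blkB, ContinuousLinearMap.comp_apply, map_sub, hPNzero]
    · ext u
      simp [blkC, hCdef, ContinuousLinearMap.comp_apply, map_sub, hPMzero]
    · intro hsub
      obtain ⟨m, hm⟩ := LinearMap.mem_range.mp (harange n)
      obtain ⟨x, hx⟩ : ∃ x, blkD M N (T - P n) x = D (a n) := hsub ⟨m, hm⟩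
      rw [hblkD n] at hx
      -- hx : D x - D (R n x) = D (a n)
      set c : ℂ := inner ℂ (a n) x with hc
      have hker : a n + c • a n - x ∈ LinearMap.ker (D : ↥Mᗮ →ₗ[ℂ] ↥Nᗮ) := by
        rw [LinearMap.mem_ker]
        have hx' : D x - c • D (a n) = D (a n) := by
          have := hx
          simp only [ContinuousLinearMap.sub_apply, ContinuousLinearMap.comp_apply,
            hRapp, map_smul] at this
          exact this
        have hDx : D x = D (a n) + c • D (a n) := sub_eq_iff_eq_add.mp hx'
        show D (a n + c • a n - x) = 0
        rw [map_sub, map_add, map_smul, hDx]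
        abel
      have hzero : (inner ℂ (a n + c • a n - x) (a n) : ℂ) = 0 := by
        have := (Submodule.mem_orthogonal _ (a n)).mp (haker n)
        exact this _ hker
      have hone : (inner ℂ (a n) (a n) : ℂ) = 1 := by
        rw [inner_self_eq_norm_sq_to_K, hanorm n]
        norm_num
      rw [inner_sub_left, inner_add_left, inner_smul_left, hone, mul_one] at hzero
      have hcc : (inner ℂ x (a n) : ℂ) = (starRingEnd ℂ) c := by
        rw [hc, ← inner_conj_symm]
      rw [hcc] at hzero
      have hcontra : (1 : ℂ) = 0 := by linear_combination hzero
      exact one_ne_zero hcontra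
  · -- convergence
    have hx0 : Tendsto (fun n => P n x) atTop (nhds 0) := by
      set y : ↥Mᗮ := Mᗮ.orthogonalProjectionOnto x with hy
      have hsum : Summable fun n => ‖(inner ℂ (a n) y : ℂ)‖ ^ 2 :=
        ha.inner_products_summable y
      have hsq : Tendsto (fun n => ‖(inner ℂ (a n) y : ℂ)‖ ^ 2) atTop (nhds 0) :=
        hsum.tendsto_atTop_zero
      have htin : Tendsto (fun n => ‖(inner ℂ (a n) y : ℂ)‖) atTop (nhds 0) := by
        have h1 := hsq.sqrt
        rw [Real.sqrt_zero] at h1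
        have h2 : (fun n => Real.sqrt (‖(inner ℂ (a n) y : ℂ)‖ ^ 2)) =
            fun n => ‖(inner ℂ (a n) y : ℂ)‖ :=
          funext fun n => Real.sqrt_sq (norm_nonneg _)
        rwa [h2] at h1
      have hbound : ∀ n, ‖P n x‖ ≤ ‖(inner ℂ (a n) y : ℂ)‖ * ‖D‖ := by
        intro n
        rw [hPapp n x, ← hy]
        calc ‖((D ((inner ℂ (a n) y : ℂ) • a n)) : K)‖
            = ‖D ((inner ℂ (a n) y : ℂ) • a n)‖ := rfl
          _ = ‖(inner ℂ (a n) y : ℂ)‖ * ‖D (a n)‖ := by rw [map_smul, norm_smul]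
          _ ≤ ‖(inner ℂ (a n) y : ℂ)‖ * ‖D‖ := by
              apply mul_le_mul_of_nonneg_left _ (norm_nonneg _)
              calc ‖D (a n)‖ ≤ ‖D‖ * ‖a n‖ := D.le_opNorm _
                _ = ‖D‖ := by rw [hanorm n, mul_one]
      have hnorm : Tendsto (fun n => ‖P n x‖) atTop (nhds 0) := by
        apply squeeze_zero (fun n => norm_nonneg _) hbound
        simpa using htin.mul_const ‖D‖
      exact tendsto_zero_iff_norm_tendsto_zero.mpr hnorm
    have h3 : Tendsto (fun n => T x - P n x) atTop (nhds (T x - 0)) :=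
      tendsto_const_nhds.sub hx0
    rw [sub_zero] at h3
    exact h3
end
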